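/- Let ω : ℝ → ℝ³ be continuous and let R : ℝ → M₃(ℝ) be differentiable and satisfy the kinematic equation Ṙ(t) = S(ω(t)) R(t) for all t. If R(0) ∈ SO(3), then R(t) ∈ SO(3) for all t ∈ ℝ; that is, the attitude kinematics leave SO(3) invariant. -/

import Mathlib

/-! Along a solution of `Ṙ = A R` with `A` skew-symmetric, the Gram matrix `Rᵀ R` has derivative
`Rᵀ (Aᵀ + A) R = 0`, so `Rᵀ R = 1` for all time. Then `(det R)² = 1`, and since `det R` is
continuous on the connected line and starts at `1`, it stays `1`. -/

open Matrix

noncomputable section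

attribute [local instance] Matrix.normedAddCommGroup Matrix.normedSpace

/-- The space of real 3×3 matrices. -/
abbrev M3 := Matrix (Fin 3) (Fin 3) ℝ

/-- Vectors in ℝ³. -/
abbrev V3 := Fin 3 → ℝ

/-- The skew-symmetric matrix `S a` associated with the cross product,
i.e. `S a *ᵥ b = a × b`. -/
def S (a : V3) : M3 :=
  !![0, -a 2, a 1;
     a 2, 0, -a 0;
     -a 1, a 0, 0]

/-- SO(3): real 3×3 matrices `R` with `Rᵀ * R = 1` and `det R = 1`. -/
def SO3 : Set M3 := {R | Rᵀ * R = 1 ∧ R.det = 1}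

section MatrixDeriv

variable {𝕜 : Type*} [NontriviallyNormedField 𝕜] {l m n : Type*} {x : 𝕜}

theorem HasDerivAt.matrix_apply [Fintype n] {A : 𝕜 → Matrix m n 𝕜} {A' : Matrix m n 𝕜}
    (h : HasDerivAt A A' x) (i : m) (j : n) : HasDerivAt (fun s => A s i j) (A' i j) x :=
  hasDerivAt_pi.1 (hasDerivAt_pi.1 h i) j

theorem HasDerivAt.matrix_transpose [Fintype m] [Fintype n] {A : 𝕜 → Matrix m n 𝕜}
    {A' : Matrix m n 𝕜} (h : HasDerivAt A A' x) : HasDerivAt (fun s => (A s)ᵀ) A'ᵀ x :=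
  hasDerivAt_pi.2 fun j => hasDerivAt_pi.2 fun i => h.matrix_apply i j

theorem HasDerivAt.matrix_mul [Fintype m] [Fintype n] {A : 𝕜 → Matrix l m 𝕜}
    {B : 𝕜 → Matrix m n 𝕜} {A' : Matrix l m 𝕜} {B' : Matrix m n 𝕜} (hA : HasDerivAt A A' x)
    (hB : HasDerivAt B B' x) :
    HasDerivAt (fun s => A s * B s) (A' * B x + A x * B') x := by
  refine hasDerivAt_pi.2 fun i => hasDerivAt_pi.2 fun k => ?_
  rw [Matrix.add_apply, mul_apply, mul_apply, ← Finset.sum_add_distrib]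
  exact HasDerivAt.fun_sum fun j _ => (hA.matrix_apply i j).fun_mul (hB.matrix_apply j k)

end MatrixDeriv

section SkewFlow

variable {𝕜 : Type*} [RCLike 𝕜] {n : Type*} [Fintype n]

theorem transpose_mul_self_eq_of_hasDerivAt_skew {A R : 𝕜 → Matrix n n 𝕜}
    (hA : ∀ t, (A t)ᵀ = -A t) (hR : ∀ t, HasDerivAt R (A t * R t) t) (t s : 𝕜) :
    (R t)ᵀ * R t = (R s)ᵀ * R s := by
  have hgram : ∀ t, HasDerivAt (fun s => (R s)ᵀ * R s) 0 t := fun t => by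
    convert (hR t).matrix_transpose.matrix_mul (hR t) using 1
    rw [transpose_mul, hA, Matrix.mul_neg, Matrix.neg_mul, Matrix.mul_assoc, neg_add_cancel]
  exact is_const_of_deriv_eq_zero (f := fun s => (R s)ᵀ * R s)
    (fun t => (hgram t).differentiableAt) (fun t => (hgram t).deriv) t s

theorem det_sq_eq_one_of_transpose_mul_self_eq_one [DecidableEq n] {Q : Matrix n n 𝕜}
    (hQ : Qᵀ * Q = 1) : Q.det ^ 2 = 1 := by
  simpa [det_mul, det_transpose, sq] using congrArg det hQ

end SkewFlow

theorem S_transpose (a : V3) : (S a)ᵀ = -S a := by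
  ext i j; fin_cases i <;> fin_cases j <;> simp [S]

theorem attitude_kinematics_leave_SO3_invariant_general
    (ω : ℝ → V3)
    (R : ℝ → M3) (hR : ∀ t, HasDerivAt R (S (ω t) * R t) t)
    (h0 : R 0 ∈ SO3) :
    ∀ t : ℝ, R t ∈ SO3 := by
  have horth : ∀ t, (R t)ᵀ * R t = 1 := fun t => by
    rw [transpose_mul_self_eq_of_hasDerivAt_skew (fun t => S_transpose (ω t)) hR t 0, h0.1]
  have hdet_cont : Continuous fun t => (R t).det :=
    (continuous_iff_continuousAt.2 fun t => (hR t).continuousAt).matrix_det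
  have hdet_sq : Set.EqOn ((fun t => (R t).det) ^ 2) 1 Set.univ := fun t _ =>
    det_sq_eq_one_of_transpose_mul_self_eq_one (horth t)
  rcases isPreconnected_univ.eq_one_or_eq_neg_one_of_sq_eq hdet_cont.continuousOn hdet_sq with
    hdet | hdet
  · exact fun t => ⟨horth t, hdet (Set.mem_univ t)⟩
  · have h := hdet (Set.mem_univ 0)
    norm_num [h0.2] at h

/-- If `ω : ℝ → ℝ³` is continuous, `R : ℝ → M₃(ℝ)` is differentiable and satisfies
the attitude kinematics `Ṙ(t) = S(ω(t)) R(t)` for all `t`, and `R(0) ∈ SO(3)`,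
then `R(t) ∈ SO(3)` for all `t`: the attitude kinematics leave SO(3) invariant. -/
theorem attitude_kinematics_leave_SO3_invariant
    (ω : ℝ → V3) (hω : Continuous ω)
    (R : ℝ → M3) (hR : ∀ t, HasDerivAt R (S (ω t) * R t) t)
    (h0 : R 0 ∈ SO3) :
    ∀ t : ℝ, R t ∈ SO3 :=
  attitude_kinematics_leave_SO3_invariant_general ω R hR h0
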